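/- arXiv:1404.5455 — 7 statements merged into one kernel-verified Lean document; each statement's English description precedes it below -/
import Mathlib

section
/- For the k×(k+1) rectangle with generators σ_L, σ_R as above, the commutator [σ_L, σ_R⁻¹] = σ_L σ_R⁻¹ σ_L⁻¹ σ_R satisfies [σ_L, σ_R⁻¹](i,j) = (i, j-2) whenever i > 1 and j > 2. -/
/-!
Follow the point `(i, j)` through the four rotations:
`(i, j) ↦ (j - 1, k + 2 - i) ↦ (i - 1, j - 1) ↦ (k + 3 - j, i) ↦ (i, j - 2)`.
The hypotheses `1 < i` and `2 < j` keep every intermediate point inside the block on which the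
relevant rotation is specified, so only the rotation formulas and their inverses are needed.
-/

def IsLeftRotation (k : ℕ) (σ : Equiv.Perm (ℕ × ℕ)) : Prop :=
  ∀ i j, 1 ≤ i → i ≤ k → 1 ≤ j → j ≤ k → σ (i, j) = (j, k + 1 - i)

def IsRightRotation (k : ℕ) (σ : Equiv.Perm (ℕ × ℕ)) : Prop :=
  ∀ i j, 1 ≤ i → i ≤ k → 2 ≤ j → j ≤ k + 1 → σ (i, j) = (j - 1, k + 2 - i)

variable {k : ℕ} {σ : Equiv.Perm (ℕ × ℕ)}

theorem IsLeftRotation.inv_apply (hσ : IsLeftRotation k σ) {a b : ℕ}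
    (ha : 1 ≤ a) (ha' : a ≤ k) (hb : 1 ≤ b) (hb' : b ≤ k) :
    σ⁻¹ (a, b) = (k + 1 - b, a) := by
  rw [Equiv.Perm.inv_eq_iff_eq, hσ _ _ (by omega) (by omega) ha ha', Prod.mk.injEq]
  omega

theorem IsRightRotation.inv_apply (hσ : IsRightRotation k σ) {a b : ℕ}
    (ha : 1 ≤ a) (ha' : a ≤ k) (hb : 2 ≤ b) (hb' : b ≤ k + 1) :
    σ⁻¹ (a, b) = (k + 2 - b, a + 1) := by
  rw [Equiv.Perm.inv_eq_iff_eq, hσ _ _ (by omega) (by omega) (by omega) (by omega),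
    Prod.mk.injEq]
  omega

theorem commutator_L_Rinv_shifts_left_general (k : ℕ) (σL σR : Equiv.Perm (ℕ × ℕ))
    (hL : ∀ i j, 1 ≤ i → i ≤ k → 1 ≤ j → j ≤ k → σL (i, j) = (j, k + 1 - i))
    (hR : ∀ i j, 1 ≤ i → i ≤ k → 2 ≤ j → j ≤ k + 1 → σR (i, j) = (j - 1, k + 2 - i)) :
    ∀ i j, 1 < i → i ≤ k → 2 < j → j ≤ k + 1 →
      (σL * σR⁻¹ * σL⁻¹ * σR) (i, j) = (i, j - 2) := by
  intro i j hi hik hj hjk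
  have hL : IsLeftRotation k σL := hL
  have hR : IsRightRotation k σR := hR
  have h₁ : σR (i, j) = (j - 1, k + 2 - i) := hR i j (by omega) hik (by omega) hjk
  have h₂ : σL⁻¹ (j - 1, k + 2 - i) = (i - 1, j - 1) := by
    rw [hL.inv_apply (by omega) (by omega) (by omega) (by omega), Prod.mk.injEq]
    omega
  have h₃ : σR⁻¹ (i - 1, j - 1) = (k + 3 - j, i) := by
    rw [hR.inv_apply (by omega) (by omega) (by omega) (by omega), Prod.mk.injEq]
    omega
  have h₄ : σL (k + 3 - j, i) = (i, j - 2) := by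
    rw [hL _ _ (by omega) (by omega) (by omega) hik, Prod.mk.injEq]
    omega
  simp only [Equiv.Perm.mul_apply, h₁, h₂, h₃, h₄]

/-- For the k×(k+1) rectangle with generators σ_L (clockwise rotation of the left k×k block,
fixing column k+1) and σ_R (clockwise rotation of the right k×k block, fixing column 1),
the commutator [σ_L, σ_R⁻¹] = σ_L σ_R⁻¹ σ_L⁻¹ σ_R satisfies
[σ_L, σ_R⁻¹](i,j) = (i, j-2) whenever i > 1 and j > 2. -/
theorem commutator_L_Rinv_shifts_left (k : ℕ) (σL σR : Equiv.Perm (ℕ × ℕ))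
    (hL : ∀ i j, 1 ≤ i → i ≤ k → 1 ≤ j → j ≤ k → σL (i, j) = (j, k + 1 - i))
    (hL' : ∀ i, 1 ≤ i → i ≤ k → σL (i, k + 1) = (i, k + 1))
    (hR : ∀ i j, 1 ≤ i → i ≤ k → 2 ≤ j → j ≤ k + 1 → σR (i, j) = (j - 1, k + 2 - i))
    (hR' : ∀ i, 1 ≤ i → i ≤ k → σR (i, 1) = (i, 1)) :
    ∀ i j, 1 < i → i ≤ k → 2 < j → j ≤ k + 1 →
      (σL * σR⁻¹ * σL⁻¹ * σR) (i, j) = (i, j - 2) :=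
  commutator_L_Rinv_shifts_left_general k σL σR hL hR
end

section
/- For the k×(k+1) rectangle with generators σ_L, σ_R as above, the commutator [σ_L, σ_R] = σ_L σ_R σ_L⁻¹ σ_R⁻¹ satisfies [σ_L, σ_R](i,j) = (i+2, j) whenever i < k-1 and 1 < j < k+1. -/
section RectangleRotations

variable {k : ℕ}

theorem rotL_inv_apply {σL : Equiv.Perm (ℕ × ℕ)}
    (hL : ∀ i j, 1 ≤ i → i ≤ k → 1 ≤ j → j ≤ k → σL (i, j) = (j, k + 1 - i))
    {a b : ℕ} (ha : 1 ≤ a) (hak : a ≤ k) (hb : 1 ≤ b) (hbk : b ≤ k) :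
    σL⁻¹ (a, b) = (k + 1 - b, a) := by
  rw [Equiv.Perm.inv_eq_iff_eq, hL _ _ (by omega) (by omega) ha hak, Prod.mk.injEq]
  omega

theorem rotR_inv_apply {σR : Equiv.Perm (ℕ × ℕ)}
    (hR : ∀ i j, 1 ≤ i → i ≤ k → 2 ≤ j → j ≤ k + 1 → σR (i, j) = (j - 1, k + 2 - i))
    {a b : ℕ} (ha : 1 ≤ a) (hak : a ≤ k) (hb : 2 ≤ b) (hbk : b ≤ k) :
    σR⁻¹ (a, b) = (k + 2 - b, a + 1) := by
  rw [Equiv.Perm.inv_eq_iff_eq, hR _ _ (by omega) (by omega) (by omega) (by omega),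
    Prod.mk.injEq]
  omega

end RectangleRotations

theorem commutator_L_R_shifts_down_general (k : ℕ) (σL σR : Equiv.Perm (ℕ × ℕ))
    (hL : ∀ i j, 1 ≤ i → i ≤ k → 1 ≤ j → j ≤ k → σL (i, j) = (j, k + 1 - i))
    (hR : ∀ i j, 1 ≤ i → i ≤ k → 2 ≤ j → j ≤ k + 1 → σR (i, j) = (j - 1, k + 2 - i)) :
    ∀ i j, 1 ≤ i → i + 1 < k → 1 < j → j < k + 1 →
      (σL * σR * σL⁻¹ * σR⁻¹) (i, j) = (i + 2, j) := by
  intro i j hi hik hj hjk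
  calc (σL * σR * σL⁻¹ * σR⁻¹) (i, j)
      = σL (σR (σL⁻¹ (σR⁻¹ (i, j)))) := rfl
    _ = σL (σR (σL⁻¹ (k + 2 - j, i + 1))) := by
      rw [rotR_inv_apply hR hi (by omega) (by omega) (by omega)]
    _ = σL (σR (k - i, k + 2 - j)) := by
      rw [rotL_inv_apply hL (by omega) (by omega) (by omega) (by omega)]
      congr 3; omega
    _ = σL (k + 1 - j, i + 2) := by
      rw [hR _ _ (by omega) (by omega) (by omega) (by omega)]
      congr 2 <;> omega
    _ = (i + 2, j) := by
      rw [hL _ _ (by omega) (by omega) (by omega) (by omega)]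
      congr 1; omega

/-- For the k×(k+1) rectangle with generators σ_L and σ_R as in the paper,
the commutator [σ_L, σ_R] = σ_L σ_R σ_L⁻¹ σ_R⁻¹ satisfies
[σ_L, σ_R](i,j) = (i+2, j) whenever i < k-1 and 1 < j < k+1. -/
theorem commutator_L_R_shifts_down (k : ℕ) (σL σR : Equiv.Perm (ℕ × ℕ))
    (hL : ∀ i j, 1 ≤ i → i ≤ k → 1 ≤ j → j ≤ k → σL (i, j) = (j, k + 1 - i))
    (hL' : ∀ i, 1 ≤ i → i ≤ k → σL (i, k + 1) = (i, k + 1))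
    (hR : ∀ i j, 1 ≤ i → i ≤ k → 2 ≤ j → j ≤ k + 1 → σR (i, j) = (j - 1, k + 2 - i))
    (hR' : ∀ i, 1 ≤ i → i ≤ k → σR (i, 1) = (i, 1)) :
    ∀ i j, 1 ≤ i → i + 1 < k → 1 < j → j < k + 1 →
      (σL * σR * σL⁻¹ * σR⁻¹) (i, j) = (i + 2, j) :=
  commutator_L_R_shifts_down_general k σL σR hL hR
end

section
/- For the k×(k+1) rectangle with generators σ_L, σ_R as above, σ_R² σ_L² (i,j) = (i, j+2) if j < k, and σ_R² σ_L² (i,j) = (k+1-i, j-(k-1)) if j ≥ k. -/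
/-!
σ_L turns the left k × k square (columns 1, …, k) a quarter turn and fixes column k + 1; σ_R turns
the right square (columns 2, …, k + 1) and fixes column 1. So σ_L² and σ_R² are the half-turns of
two squares whose centres are one column apart, and their composite is the translation by two
columns where both half-turns apply (j < k). Column k is sent by σ_L² to column 1, which σ_R fixes;
column k + 1 is fixed by σ_L and sent by σ_R² to column 2.
-/

theorem sigmaL_sq_apply {k : ℕ} {σL : Equiv.Perm (ℕ × ℕ)}
    (hL : ∀ i j, 1 ≤ i → i ≤ k → 1 ≤ j → j ≤ k → σL (i, j) = (j, k + 1 - i))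
    {i j : ℕ} (hi1 : 1 ≤ i) (hik : i ≤ k) (hj1 : 1 ≤ j) (hjk : j ≤ k) :
    (σL ^ 2) (i, j) = (k + 1 - i, k + 1 - j) := by
  rw [sq, Equiv.Perm.mul_apply, hL i j hi1 hik hj1 hjk,
    hL j (k + 1 - i) hj1 hjk (by omega) (by omega)]

theorem sigmaR_sq_apply {k : ℕ} {σR : Equiv.Perm (ℕ × ℕ)}
    (hR : ∀ i j, 1 ≤ i → i ≤ k → 2 ≤ j → j ≤ k + 1 → σR (i, j) = (j - 1, k + 2 - i))
    {i j : ℕ} (hi1 : 1 ≤ i) (hik : i ≤ k) (hj2 : 2 ≤ j) (hjk : j ≤ k + 1) :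
    (σR ^ 2) (i, j) = (k + 1 - i, k + 3 - j) := by
  rw [sq, Equiv.Perm.mul_apply, hR i j hi1 hik hj2 hjk,
    hR (j - 1) (k + 2 - i) (by omega) (by omega) (by omega) (by omega)]
  congr 1 <;> omega

/-- For the k×(k+1) rectangle with generators σ_L and σ_R as in the paper,
σ_R² σ_L² (i,j) = (i, j+2) if j < k, and σ_R² σ_L² (i,j) = (k+1-i, j-(k-1)) if j ≥ k. -/
theorem sigmaR_sq_sigmaL_sq_action (k : ℕ) (σL σR : Equiv.Perm (ℕ × ℕ))
    (hL : ∀ i j, 1 ≤ i → i ≤ k → 1 ≤ j → j ≤ k → σL (i, j) = (j, k + 1 - i))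
    (hL' : ∀ i, 1 ≤ i → i ≤ k → σL (i, k + 1) = (i, k + 1))
    (hR : ∀ i j, 1 ≤ i → i ≤ k → 2 ≤ j → j ≤ k + 1 → σR (i, j) = (j - 1, k + 2 - i))
    (hR' : ∀ i, 1 ≤ i → i ≤ k → σR (i, 1) = (i, 1)) :
    ∀ i j, 1 ≤ i → i ≤ k → 1 ≤ j → j ≤ k + 1 →
      (j < k → (σR ^ 2 * σL ^ 2) (i, j) = (i, j + 2)) ∧
      (k ≤ j → (σR ^ 2 * σL ^ 2) (i, j) = (k + 1 - i, j - (k - 1))) := by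
  intro i j hi1 hik hj1 hjk
  rw [Equiv.Perm.mul_apply]
  refine ⟨fun hjlt => ?_, fun hkj => ?_⟩
  · rw [sigmaL_sq_apply hL hi1 hik hj1 hjlt.le,
      sigmaR_sq_apply hR (by omega) (by omega) (by omega) (by omega)]
    congr 1 <;> omega
  obtain hj | hj : j = k ∨ j = k + 1 := by omega
  all_goals subst j
  · have hfix : σR (k + 1 - i, 1) = (k + 1 - i, 1) := hR' (k + 1 - i) (by omega) (by omega)
    rw [sigmaL_sq_apply hL hi1 hik hj1 le_rfl, Nat.add_sub_cancel_left,
      Equiv.Perm.pow_apply_eq_self_of_apply_eq_self hfix]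
    congr 1; omega
  · rw [Equiv.Perm.pow_apply_eq_self_of_apply_eq_self (hL' i hi1 hik),
      sigmaR_sq_apply hR hi1 hik (by omega) le_rfl]
    congr 1; omega
end

section
/- For the k×(k+1) rectangle with generators σ_L, σ_R as above, the permutation (σ_R⁻¹ σ_L⁻¹)² fixes every interior tile (i,j) with 2 ≤ i ≤ k and 2 ≤ j ≤ k, and cyclically rotates the remaining boundary tiles (the left column, top row, and right column) by k+1 positions. -/
/-! The inverses σ_L⁻¹ and σ_R⁻¹ are quarter-turns of the left and right k×k squares, each
fixing the column the other one moves. On the tiles (i,j) with 2 ≤ i ≤ k and j ≤ k their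
composite τ = σ_R⁻¹ σ_L⁻¹ is the half-turn (i,j) ↦ (k+2-i, k+2-j), an involution on the interior.
On the boundary cycle of length 3k-1, τ sends the left column to the right column, the right
column to the top row and the top row back to the left column, which is a shift by 2k; hence τ²
is a shift by 4k ≡ k+1. -/

/-- Enumeration of the boundary cycle (left column bottom-to-top, then top row
left-to-right, then right column top-to-bottom) of the k×(k+1) rectangle:
`boundary k t` for `t < 3k-1` lists the left column, top row and right column tiles. -/
def boundary (k t : ℕ) : ℕ × ℕ :=
  if t < k then (k - t, 1)
  else if t < 2 * k then (1, t - k + 2)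
  else (t - 2 * k + 2, k + 1)

section Boundary

variable {k t : ℕ}

theorem boundary_of_lt (ht : t < k) : boundary k t = (k - t, 1) := if_pos ht

theorem boundary_of_top_row (h₁ : k - 1 ≤ t) (h₂ : t < 2 * k) :
    boundary k t = (1, t + 2 - k) := by
  unfold boundary
  split_ifs <;> ext <;> omega

theorem boundary_of_right_col (ht : 2 * k - 1 ≤ t) : boundary k t = (t + 2 - 2 * k, k + 1) := by
  unfold boundary
  split_ifs <;> ext <;> omega

end Boundary

section Generators

variable {k : ℕ} {σL σR : Equiv.Perm (ℕ × ℕ)}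

theorem sigmaL_inv_apply
    (hL : ∀ i j, 1 ≤ i → i ≤ k → 1 ≤ j → j ≤ k → σL (i, j) = (j, k + 1 - i))
    {i j : ℕ} (hi₁ : 1 ≤ i) (hi₂ : i ≤ k) (hj₁ : 1 ≤ j) (hj₂ : j ≤ k) :
    σL⁻¹ (i, j) = (k + 1 - j, i) := by
  rw [Equiv.Perm.inv_eq_iff_eq, hL _ _ (by omega) (by omega) hi₁ hi₂]
  ext <;> omega

theorem sigmaR_inv_apply
    (hR : ∀ i j, 1 ≤ i → i ≤ k → 2 ≤ j → j ≤ k + 1 → σR (i, j) = (j - 1, k + 2 - i))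
    {i j : ℕ} (hi₁ : 1 ≤ i) (hi₂ : i ≤ k) (hj₁ : 2 ≤ j) (hj₂ : j ≤ k + 1) :
    σR⁻¹ (i, j) = (k + 2 - j, i + 1) := by
  rw [Equiv.Perm.inv_eq_iff_eq, hR _ _ (by omega) (by omega) (by omega) (by omega)]
  ext <;> omega

theorem sigmaRinv_sigmaLinv_apply_of_two_le
    (hL : ∀ i j, 1 ≤ i → i ≤ k → 1 ≤ j → j ≤ k → σL (i, j) = (j, k + 1 - i))
    (hR : ∀ i j, 1 ≤ i → i ≤ k → 2 ≤ j → j ≤ k + 1 → σR (i, j) = (j - 1, k + 2 - i))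
    {i j : ℕ} (hi₁ : 2 ≤ i) (hi₂ : i ≤ k) (hj₁ : 1 ≤ j) (hj₂ : j ≤ k) :
    (σR⁻¹ * σL⁻¹) (i, j) = (k + 2 - i, k + 2 - j) := by
  rw [Equiv.Perm.mul_apply, sigmaL_inv_apply hL (by omega) hi₂ hj₁ hj₂,
    sigmaR_inv_apply hR (by omega) (by omega) hi₁ (by omega)]
  ext <;> omega

theorem sigmaRinv_sigmaLinv_apply_top_row
    (hL : ∀ i j, 1 ≤ i → i ≤ k → 1 ≤ j → j ≤ k → σL (i, j) = (j, k + 1 - i))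
    (hR' : ∀ i, 1 ≤ i → i ≤ k → σR (i, 1) = (i, 1))
    {j : ℕ} (hj₁ : 1 ≤ j) (hj₂ : j ≤ k) :
    (σR⁻¹ * σL⁻¹) (1, j) = (k + 1 - j, 1) := by
  rw [Equiv.Perm.mul_apply, sigmaL_inv_apply hL le_rfl (by omega) hj₁ hj₂,
    Equiv.Perm.inv_eq_iff_eq, hR' _ (by omega) (by omega)]

theorem sigmaRinv_sigmaLinv_apply_right_col
    (hL' : ∀ i, 1 ≤ i → i ≤ k → σL (i, k + 1) = (i, k + 1))
    (hR : ∀ i j, 1 ≤ i → i ≤ k → 2 ≤ j → j ≤ k + 1 → σR (i, j) = (j - 1, k + 2 - i))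
    {i : ℕ} (hi₁ : 1 ≤ i) (hi₂ : i ≤ k) :
    (σR⁻¹ * σL⁻¹) (i, k + 1) = (1, i + 1) := by
  rw [Equiv.Perm.mul_apply, (Equiv.Perm.inv_eq_iff_eq).2 (hL' i hi₁ hi₂).symm,
    sigmaR_inv_apply hR hi₁ hi₂ (by omega) le_rfl]
  ext <;> omega

theorem sigmaRinv_sigmaLinv_apply_boundary
    (hL : ∀ i j, 1 ≤ i → i ≤ k → 1 ≤ j → j ≤ k → σL (i, j) = (j, k + 1 - i))
    (hL' : ∀ i, 1 ≤ i → i ≤ k → σL (i, k + 1) = (i, k + 1))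
    (hR : ∀ i j, 1 ≤ i → i ≤ k → 2 ≤ j → j ≤ k + 1 → σR (i, j) = (j - 1, k + 2 - i))
    (hR' : ∀ i, 1 ≤ i → i ≤ k → σR (i, 1) = (i, 1))
    {t : ℕ} (ht : t < 3 * k - 1) :
    (σR⁻¹ * σL⁻¹) (boundary k t) = boundary k ((t + 2 * k) % (3 * k - 1)) := by
  have hwrap : k - 1 ≤ t → (t + 2 * k) % (3 * k - 1) = t + 1 - k := fun h => by
    rw [Nat.mod_eq_sub_mod (by omega), Nat.mod_eq_of_lt (by omega)]
    omega
  rcases Nat.lt_or_ge (t + 1) k with hleft | hwrapped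
  · rw [Nat.mod_eq_of_lt (by omega), boundary_of_lt (by omega),
      sigmaRinv_sigmaLinv_apply_of_two_le hL hR (by omega) (by omega) le_rfl (by omega),
      boundary_of_right_col (by omega)]
    ext <;> omega
  rw [hwrap (by omega)]
  rcases Nat.lt_or_ge t (2 * k - 1) with htop | hright
  · rw [boundary_of_top_row (by omega) (by omega),
      sigmaRinv_sigmaLinv_apply_top_row hL hR' (by omega) (by omega), boundary_of_lt (by omega)]
    ext <;> omega
  · rw [boundary_of_right_col hright,
      sigmaRinv_sigmaLinv_apply_right_col hL' hR (by omega) (by omega),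
      boundary_of_top_row (by omega) (by omega)]
    ext <;> omega

end Generators

/-- For the k×(k+1) rectangle with generators σ_L and σ_R as in the paper,
the permutation (σ_R⁻¹ σ_L⁻¹)² fixes every interior tile (i,j) with 2 ≤ i ≤ k and
2 ≤ j ≤ k, and cyclically rotates the remaining boundary tiles (the left column,
top row, and right column, a cycle of length 3k-1) by k+1 positions. -/
theorem sigmaRinv_sigmaLinv_sq_action (k : ℕ) (σL σR : Equiv.Perm (ℕ × ℕ))
    (hL : ∀ i j, 1 ≤ i → i ≤ k → 1 ≤ j → j ≤ k → σL (i, j) = (j, k + 1 - i))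
    (hL' : ∀ i, 1 ≤ i → i ≤ k → σL (i, k + 1) = (i, k + 1))
    (hR : ∀ i j, 1 ≤ i → i ≤ k → 2 ≤ j → j ≤ k + 1 → σR (i, j) = (j - 1, k + 2 - i))
    (hR' : ∀ i, 1 ≤ i → i ≤ k → σR (i, 1) = (i, 1)) :
    (∀ i j, 2 ≤ i → i ≤ k → 2 ≤ j → j ≤ k →
      ((σR⁻¹ * σL⁻¹) ^ 2) ((i, j) : ℕ × ℕ) = (i, j)) ∧
    (∀ t, t < 3 * k - 1 →
      ((σR⁻¹ * σL⁻¹) ^ 2) (boundary k t) = boundary k ((t + (k + 1)) % (3 * k - 1))) := by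
  refine ⟨fun i j hi₁ hi₂ hj₁ hj₂ => ?_, fun t ht => ?_⟩
  · rw [sq, Equiv.Perm.mul_apply,
      sigmaRinv_sigmaLinv_apply_of_two_le hL hR hi₁ hi₂ (by omega) hj₂,
      sigmaRinv_sigmaLinv_apply_of_two_le hL hR (by omega) (by omega) (by omega) (by omega)]
    ext <;> omega
  · have hn : 0 < 3 * k - 1 := by omega
    rw [sq, Equiv.Perm.mul_apply, sigmaRinv_sigmaLinv_apply_boundary hL hL' hR hR' ht,
      sigmaRinv_sigmaLinv_apply_boundary hL hL' hR hR' (Nat.mod_lt _ hn), Nat.mod_add_mod,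
      show t + 2 * k + 2 * k = t + (k + 1) + (3 * k - 1) by omega, Nat.add_mod_right]
end

section
/- For the k×(k+1) rectangle with generators σ_L, σ_R as above and any k ≥ 2, the group ⟨σ_L, σ_R⟩ acts doubly transitively on each of its orbits: on the full tile set if k is even, and on each of the two parity classes E = {(i,j): i+j even} and its complement if k is odd. -/
/-- A subgroup `G` of permutations of ℕ × ℕ acts doubly transitively on a set `S`:
it is transitive on `S` and can send any pair of distinct points of `S` to any
other pair of distinct points of `S`. -/
def DoublyTransitiveOn (G : Subgroup (Equiv.Perm (ℕ × ℕ))) (S : Set (ℕ × ℕ)) : Prop :=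
  (∀ a ∈ S, ∀ c ∈ S, ∃ g ∈ G, g a = c) ∧
  (∀ a ∈ S, ∀ b ∈ S, ∀ c ∈ S, ∀ d ∈ S, a ≠ b → c ≠ d →
    ∃ g ∈ G, g a = c ∧ g b = d)

/-! The stabilizer of the corner `(1, 1)` contains `σR`, the commutator `σL σR⁻¹ σL⁻¹ σR`, which
shifts rows `2, …, k` two columns to the left, and the conjugate `σL σR σL⁻¹`, which turns
column `1` into row `2`. Chasing tiles along these moves connects every tile of the orbit of
`(1, 1)` other than `(1, 1)` itself to `(k, 1)`, so the stabilizer is transitive on the rest of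
the orbit. For odd `k` the moves preserve the parity of `i + j`, and the odd class is the image of
the even class under the half-turn of the board, which exchanges the two blocks. -/

open Equiv Set
open scoped Pointwise

def StabReach {α : Type*} (G : Subgroup (Perm α)) (x p q : α) : Prop :=
  ∃ g ∈ G, g x = x ∧ g p = q

namespace StabReach

variable {α : Type*} {G : Subgroup (Perm α)} {x p q r : α}

lemma refl (p : α) : StabReach G x p p := ⟨1, G.one_mem, rfl, rfl⟩

lemma of_mem {g : Perm α} (hg : g ∈ G) (hx : g x = x) (p : α) : StabReach G x p (g p) :=
  ⟨g, hg, hx, rfl⟩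

lemma symm : StabReach G x p q → StabReach G x q p := by
  rintro ⟨g, hg, hx, rfl⟩
  exact ⟨g⁻¹, G.inv_mem hg, by rw [Perm.inv_eq_iff_eq, hx], by simp⟩

lemma trans : StabReach G x p q → StabReach G x q r → StabReach G x p r := by
  rintro ⟨g, hg, hgx, rfl⟩ ⟨g', hg', hg'x, rfl⟩
  exact ⟨g' * g, G.mul_mem hg' hg, by simp [hgx, hg'x], rfl⟩

end StabReach

namespace DoublyTransitiveOn

variable {G : Subgroup (Perm (ℕ × ℕ))} {S : Set (ℕ × ℕ)}

lemma of_exists_apply_eq (x y : ℕ × ℕ) (hx : ∀ a ∈ S, ∃ g ∈ G, g a = x)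
    (hxy : ∀ a ∈ S, ∀ b ∈ S, a ≠ b → ∃ g ∈ G, g a = x ∧ g b = y) :
    DoublyTransitiveOn G S := by
  constructor
  · intro a ha c hc
    obtain ⟨g, hg, hga⟩ := hx a ha
    obtain ⟨g', hg', hg'c⟩ := hx c hc
    exact ⟨g'⁻¹ * g, G.mul_mem (G.inv_mem hg') hg, by simp [hga, ← hg'c]⟩
  · intro a ha b hb c hc d hd hab hcd
    obtain ⟨g, hg, hga, hgb⟩ := hxy a ha b hb hab
    obtain ⟨g', hg', hg'c, hg'd⟩ := hxy c hc d hd hcd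
    exact ⟨g'⁻¹ * g, G.mul_mem (G.inv_mem hg') hg,
      by simp [hga, ← hg'c], by simp [hgb, ← hg'd]⟩

lemma of_stabReach {x y : ℕ × ℕ} (hS : ∀ g ∈ G, ∀ p ∈ S, g p ∈ S) (hyx : ∃ g ∈ G, g y = x)
    (hy : ∀ b ∈ S, b ≠ x → StabReach G x b y) : DoublyTransitiveOn G S := by
  have hx : ∀ a ∈ S, ∃ g ∈ G, g a = x := by
    intro a ha
    by_cases hax : a = x
    · exact ⟨1, G.one_mem, hax⟩
    obtain ⟨g, hg, -, hga⟩ := hy a ha hax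
    obtain ⟨g', hg', hg'y⟩ := hyx
    exact ⟨g' * g, G.mul_mem hg' hg, by simp [hga, hg'y]⟩
  refine of_exists_apply_eq x y hx fun a ha b hb hab => ?_
  obtain ⟨g, hg, hga⟩ := hx a ha
  have hgb : g b ≠ x := fun hgb => hab (g.injective (hga.trans hgb.symm))
  obtain ⟨g', hg', hg'x, hg'b⟩ := hy (g b) (hS g hg b hb) hgb
  exact ⟨g' * g, G.mul_mem hg' hg, by simp [hga, hg'x], by simp [hg'b]⟩

lemma map_conj (h : DoublyTransitiveOn G S) (φ : Perm (ℕ × ℕ)) :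
    DoublyTransitiveOn (G.map (MulAut.conj φ).toMonoidHom) (φ '' S) := by
  have hconj : ∀ g p, (MulAut.conj φ).toMonoidHom g (φ p) = φ (g p) := by
    simp
  constructor
  · rintro _ ⟨a, ha, rfl⟩ _ ⟨c, hc, rfl⟩
    obtain ⟨g, hg, hgac⟩ := h.1 a ha c hc
    exact ⟨_, Subgroup.mem_map_of_mem _ hg, by rw [hconj g, hgac]⟩
  · rintro _ ⟨a, ha, rfl⟩ _ ⟨b, hb, rfl⟩ _ ⟨c, hc, rfl⟩ _ ⟨d, hd, rfl⟩ hab hcd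
    obtain ⟨g, hg, hgac, hgbd⟩ :=
      h.2 a ha b hb c hc d hd (ne_of_apply_ne φ hab) (ne_of_apply_ne φ hcd)
    exact ⟨_, Subgroup.mem_map_of_mem _ hg, by rw [hconj g, hgac], by rw [hconj g, hgbd]⟩

end DoublyTransitiveOn

structure IsPuzzlePair (k : ℕ) (σL σR : Perm (ℕ × ℕ)) : Prop where
  two_le : 2 ≤ k
  left : ∀ i j, 1 ≤ i → i ≤ k → 1 ≤ j → j ≤ k → σL (i, j) = (j, k + 1 - i)
  left_last : ∀ i, 1 ≤ i → i ≤ k → σL (i, k + 1) = (i, k + 1)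
  right : ∀ i j, 1 ≤ i → i ≤ k → 2 ≤ j → j ≤ k + 1 → σR (i, j) = (j - 1, k + 2 - i)
  right_first : ∀ i, 1 ≤ i → i ≤ k → σR (i, 1) = (i, 1)

/-- The orbit of the corner tile `(1, 1)`. -/
def puzzleOrbit (k : ℕ) : Set (ℕ × ℕ) :=
  {p | (1 ≤ p.1 ∧ p.1 ≤ k ∧ 1 ≤ p.2 ∧ p.2 ≤ k + 1) ∧ (Even k ∨ Even (p.1 + p.2))}

lemma puzzleOrbit_finite (k : ℕ) : (puzzleOrbit k).Finite :=
  ((finite_Icc 1 k).prod (finite_Icc 1 (k + 1))).subset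
    fun _ hp => ⟨⟨hp.1.1, hp.1.2.1⟩, hp.1.2.2⟩

lemma mem_puzzleOrbit {k i j : ℕ} : (i, j) ∈ puzzleOrbit k ↔
    (1 ≤ i ∧ i ≤ k ∧ 1 ≤ j ∧ j ≤ k + 1) ∧ (k % 2 = 0 ∨ (i + j) % 2 = 0) := by
  simp [puzzleOrbit, Nat.even_iff]

lemma puzzleOrbit_of_even {k : ℕ} (hk : Even k) :
    puzzleOrbit k = {p | 1 ≤ p.1 ∧ p.1 ≤ k ∧ 1 ≤ p.2 ∧ p.2 ≤ k + 1} := by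
  simp [puzzleOrbit, hk]

lemma puzzleOrbit_of_odd {k : ℕ} (hk : Odd k) : puzzleOrbit k =
    {p | (1 ≤ p.1 ∧ p.1 ≤ k ∧ 1 ≤ p.2 ∧ p.2 ≤ k + 1) ∧ Even (p.1 + p.2)} := by
  simp [puzzleOrbit, Nat.not_even_iff_odd.2 hk]

def halfTurn (k : ℕ) (p : ℕ × ℕ) : ℕ × ℕ :=
  if 1 ≤ p.1 ∧ p.1 ≤ k ∧ 1 ≤ p.2 ∧ p.2 ≤ k + 1 then (k + 1 - p.1, k + 2 - p.2) else p

lemma halfTurn_of_mem {k i j : ℕ} (hi : 1 ≤ i) (hi' : i ≤ k) (hj : 1 ≤ j) (hj' : j ≤ k + 1) :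
    halfTurn k (i, j) = (k + 1 - i, k + 2 - j) :=
  if_pos ⟨hi, hi', hj, hj'⟩

lemma halfTurn_of_not_mem {k i j : ℕ} (h : ¬(1 ≤ i ∧ i ≤ k ∧ 1 ≤ j ∧ j ≤ k + 1)) :
    halfTurn k (i, j) = (i, j) :=
  if_neg h

lemma halfTurn_involutive (k : ℕ) : Function.Involutive (halfTurn k) := by
  rintro ⟨i, j⟩
  by_cases h : 1 ≤ i ∧ i ≤ k ∧ 1 ≤ j ∧ j ≤ k + 1
  · rw [halfTurn_of_mem h.1 h.2.1 h.2.2.1 h.2.2.2, halfTurn_of_mem (by omega) (by omega)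
      (by omega) (by omega)]
    congr 1 <;> omega
  · rw [halfTurn_of_not_mem h, halfTurn_of_not_mem h]

def halfTurnPerm (k : ℕ) : Perm (ℕ × ℕ) :=
  (halfTurn_involutive k).toPerm _

lemma halfTurnPerm_apply (k : ℕ) (p : ℕ × ℕ) : halfTurnPerm k p = halfTurn k p := rfl

lemma halfTurnPerm_inv_apply (k : ℕ) (p : ℕ × ℕ) : (halfTurnPerm k)⁻¹ p = halfTurn k p := rfl

lemma halfTurnPerm_image_puzzleOrbit {k : ℕ} (hk : Odd k) : halfTurnPerm k '' puzzleOrbit k =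
    {p | (1 ≤ p.1 ∧ p.1 ≤ k ∧ 1 ≤ p.2 ∧ p.2 ≤ k + 1) ∧ Odd (p.1 + p.2)} := by
  rw [Equiv.image_eq_preimage_symm]
  ext ⟨i, j⟩
  simp only [mem_preimage, mem_ofPred_eq]
  rw [Nat.odd_iff] at hk ⊢
  by_cases hp : 1 ≤ i ∧ i ≤ k ∧ 1 ≤ j ∧ j ≤ k + 1
  · rw [← Perm.inv_def, halfTurnPerm_inv_apply, halfTurn_of_mem hp.1 hp.2.1 hp.2.2.1 hp.2.2.2,
      mem_puzzleOrbit]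
    omega
  · rw [← Perm.inv_def, halfTurnPerm_inv_apply, halfTurn_of_not_mem hp, mem_puzzleOrbit]
    tauto

namespace IsPuzzlePair

variable {k : ℕ} {σL σR : Perm (ℕ × ℕ)}

lemma left_mem_closure : σL ∈ Subgroup.closure {σL, σR} :=
  Subgroup.subset_closure (mem_insert _ _)

lemma right_mem_closure : σR ∈ Subgroup.closure {σL, σR} :=
  Subgroup.subset_closure (mem_insert_of_mem _ rfl)

lemma left_apply_last_one (h : IsPuzzlePair k σL σR) : σL (k, 1) = (1, 1) := by
  have hk := h.two_le
  rw [h.left k 1 (by omega) le_rfl le_rfl (by omega)]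
  congr 1; omega

lemma inv_left_apply (h : IsPuzzlePair k σL σR) {i j : ℕ} (hi : 1 ≤ i) (hi' : i ≤ k)
    (hj : 1 ≤ j) (hj' : j ≤ k) : σL⁻¹ (i, j) = (k + 1 - j, i) := by
  rw [Perm.inv_eq_iff_eq, h.left _ _ (by omega) (by omega) hi hi']
  congr 1; omega

lemma inv_right_apply (h : IsPuzzlePair k σL σR) {i j : ℕ} (hi : 1 ≤ i) (hi' : i ≤ k)
    (hj : 2 ≤ j) (hj' : j ≤ k + 1) : σR⁻¹ (i, j) = (k + 2 - j, i + 1) := by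
  rw [Perm.inv_eq_iff_eq, h.right _ _ (by omega) (by omega) (by omega) (by omega)]
  congr 1; omega

lemma inv_right_apply_first (h : IsPuzzlePair k σL σR) {i : ℕ} (hi : 1 ≤ i) (hi' : i ≤ k) :
    σR⁻¹ (i, 1) = (i, 1) := by
  rw [Perm.inv_eq_iff_eq, h.right_first i hi hi']

lemma stabReach_right_apply (h : IsPuzzlePair k σL σR) (p : ℕ × ℕ) :
    StabReach (Subgroup.closure {σL, σR}) (1, 1) p (σR p) :=
  .of_mem right_mem_closure (h.right_first 1 le_rfl (le_trans one_le_two h.two_le)) p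

/-- The commutator `σL σR⁻¹ σL⁻¹ σR` fixes `(1, 1)` and shifts rows `2, …, k` two columns left. -/
lemma stabReach_sub_two (h : IsPuzzlePair k σL σR) {i j : ℕ} (hi : 2 ≤ i) (hi' : i ≤ k)
    (hj : 3 ≤ j) (hj' : j ≤ k + 1) :
    StabReach (Subgroup.closure {σL, σR}) (1, 1) (i, j) (i, j - 2) := by
  have hk := h.two_le
  have hmem : σL * σR⁻¹ * σL⁻¹ * σR ∈ Subgroup.closure {σL, σR} :=
    mul_mem (mul_mem (mul_mem left_mem_closure (inv_mem right_mem_closure))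
      (inv_mem left_mem_closure)) right_mem_closure
  have hfix : (σL * σR⁻¹ * σL⁻¹ * σR) (1, 1) = (1, 1) := by
    simp only [Perm.mul_apply]
    rw [h.right_first 1 le_rfl (by omega), h.inv_left_apply le_rfl (by omega) le_rfl (by omega),
      Nat.add_sub_cancel, h.inv_right_apply_first (by omega) le_rfl, h.left_apply_last_one]
  have happly : (σL * σR⁻¹ * σL⁻¹ * σR) (i, j) = (i, j - 2) := by
    simp only [Perm.mul_apply]
    rw [h.right i j (by omega) hi' (by omega) hj', h.inv_left_apply (by omega) (by omega)
      (by omega) (by omega), h.inv_right_apply (by omega) (by omega) (by omega) (by omega),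
      h.left _ _ (by omega) (by omega) (by omega) (by omega)]
    congr 1 <;> omega
  exact happly ▸ StabReach.of_mem hmem hfix (i, j)

lemma stabReach_of_mod_two_eq (h : IsPuzzlePair k σL σR) {i j j' : ℕ} (hi : 2 ≤ i)
    (hi' : i ≤ k) (hj : 1 ≤ j) (hj' : j ≤ k + 1) (hj₂ : 1 ≤ j') (hj₂' : j' ≤ k + 1)
    (hjj : j % 2 = j' % 2) : StabReach (Subgroup.closure {σL, σR}) (1, 1) (i, j) (i, j') := by
  wlog hle : j' ≤ j generalizing j j'
  · exact (this hj₂ hj₂' hj hj' hjj.symm (by omega)).symm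
  obtain ⟨m, rfl⟩ : ∃ m, j = j' + 2 * m := ⟨(j - j') / 2, by omega⟩
  clear hj hjj hle
  induction m with
  | zero => exact .refl _
  | succ m ih =>
    have hshift := h.stabReach_sub_two hi hi' (j := j' + 2 * (m + 1)) (by omega) hj'
    rw [show j' + 2 * (m + 1) - 2 = j' + 2 * m by omega] at hshift
    exact hshift.trans (ih (by omega))

lemma stabReach_last_row_col_two (h : IsPuzzlePair k σL σR) {i : ℕ} (hi : 1 ≤ i) (hi' : i ≤ k) :
    StabReach (Subgroup.closure {σL, σR}) (1, 1) (k, i + 1) (i, 2) := by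
  have happly : σR (k, i + 1) = (i, 2) := by
    rw [h.right k (i + 1) (by omega) le_rfl (by omega) (by omega)]
    congr 1; omega
  exact happly ▸ h.stabReach_right_apply (k, i + 1)

/-- The conjugate `σL σR σL⁻¹` fixes `(1, 1)` and carries column `1` to row `2`. -/
lemma stabReach_col_one (h : IsPuzzlePair k σL σR) {i : ℕ} (hi : 2 ≤ i) (hi' : i ≤ k) :
    StabReach (Subgroup.closure {σL, σR}) (1, 1) (i, 1) (2, k + 2 - i) := by
  have hmem : σL * σR * σL⁻¹ ∈ Subgroup.closure {σL, σR} :=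
    mul_mem (mul_mem left_mem_closure right_mem_closure) (inv_mem left_mem_closure)
  have hfix : (σL * σR * σL⁻¹) (1, 1) = (1, 1) := by
    simp only [Perm.mul_apply]
    rw [h.inv_left_apply le_rfl (by omega) le_rfl (by omega), Nat.add_sub_cancel,
      h.right_first k (by omega) le_rfl, h.left_apply_last_one]
  have happly : (σL * σR * σL⁻¹) (i, 1) = (2, k + 2 - i) := by
    simp only [Perm.mul_apply]
    rw [h.inv_left_apply (by omega) hi' le_rfl (by omega), Nat.add_sub_cancel,
      h.right k i (by omega) le_rfl hi (by omega), Nat.add_sub_cancel_left,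
      h.left _ _ (by omega) (by omega) one_le_two h.two_le]
    congr 1; omega
  exact happly ▸ StabReach.of_mem hmem hfix (i, 1)

lemma stabReach_last_row (h : IsPuzzlePair k σL σR) {j : ℕ} (hj : 1 ≤ j) (hj' : j ≤ k + 1)
    (hp : k % 2 = 0 ∨ (k + j) % 2 = 0) :
    StabReach (Subgroup.closure {σL, σR}) (1, 1) (k, j) (k, 1) := by
  have hk := h.two_le
  by_cases hjodd : j % 2 = 1
  · exact h.stabReach_of_mod_two_eq hk le_rfl hj hj' le_rfl (by omega) (by omega)
  have hcol_two : StabReach (Subgroup.closure {σL, σR}) (1, 1) (k, j) (k, 2) :=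
    h.stabReach_of_mod_two_eq hk le_rfl hj hj' (by omega) (by omega) (by omega)
  have hkk : StabReach (Subgroup.closure {σL, σR}) (1, 1) (k, k + 1) (k, 1) :=
    h.stabReach_of_mod_two_eq hk le_rfl (by omega) le_rfl le_rfl (by omega) (by omega)
  exact hcol_two.trans ((h.stabReach_last_row_col_two (by omega) le_rfl).symm.trans hkk)

lemma stabReach_of_even_col (h : IsPuzzlePair k σL σR) {i j : ℕ} (hi : 2 ≤ i) (hi' : i ≤ k)
    (hj : 1 ≤ j) (hj' : j ≤ k + 1) (hjeven : j % 2 = 0) (hp : k % 2 = 0 ∨ (i + j) % 2 = 0) :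
    StabReach (Subgroup.closure {σL, σR}) (1, 1) (i, j) (k, 1) := by
  have hcol_two : StabReach (Subgroup.closure {σL, σR}) (1, 1) (i, j) (i, 2) :=
    h.stabReach_of_mod_two_eq hi hi' hj hj' (by omega) (by omega) (by omega)
  refine hcol_two.trans ((h.stabReach_last_row_col_two (by omega) hi').symm.trans ?_)
  exact h.stabReach_last_row (by omega) (by omega) (by omega)

lemma stabReach_of_two_le (h : IsPuzzlePair k σL σR) {i j : ℕ} (hi : 2 ≤ i) (hi' : i ≤ k)
    (hj : 1 ≤ j) (hj' : j ≤ k + 1) (hp : k % 2 = 0 ∨ (i + j) % 2 = 0) :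
    StabReach (Subgroup.closure {σL, σR}) (1, 1) (i, j) (k, 1) := by
  have hk := h.two_le
  by_cases hjeven : j % 2 = 0
  · exact h.stabReach_of_even_col hi hi' hj hj' hjeven hp
  have hrow_two : StabReach (Subgroup.closure {σL, σR}) (1, 1) (i, j) (2, k + 2 - i) :=
    (h.stabReach_of_mod_two_eq hi hi' hj hj' le_rfl (by omega) (by omega)).trans
      (h.stabReach_col_one hi hi')
  refine hrow_two.trans ?_
  by_cases hkeven : (k + 2 - i) % 2 = 0
  · exact h.stabReach_of_even_col le_rfl hk (by omega) (by omega) hkeven (by omega)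
  -- here `k` is even, and `(2, 1)` is carried to the even column `k`
  have h21 : StabReach (Subgroup.closure {σL, σR}) (1, 1) (2, k + 2 - i) (2, k) := by
    refine (h.stabReach_of_mod_two_eq le_rfl hk (by omega) (by omega) le_rfl (by omega)
      (by omega)).trans ?_
    simpa using h.stabReach_col_one le_rfl hk
  exact h21.trans (h.stabReach_of_even_col le_rfl hk (by omega) (by omega) (by omega)
    (by omega))

lemma stabReach_of_mem (h : IsPuzzlePair k σL σR) {p : ℕ × ℕ} (hp : p ∈ puzzleOrbit k)
    (hp₁ : p ≠ (1, 1)) : StabReach (Subgroup.closure {σL, σR}) (1, 1) p (k, 1) := by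
  obtain ⟨i, j⟩ := p
  obtain ⟨⟨hi, hi', hj, hj'⟩, hpar⟩ := mem_puzzleOrbit.1 hp
  have hk := h.two_le
  rcases (show 2 ≤ i ∨ i = 1 by omega) with hi₂ | rfl
  · exact h.stabReach_of_two_le hi₂ hi' hj hj' hpar
  have hrow_one : ∀ j, 3 ≤ j → j ≤ k + 1 → (k % 2 = 0 ∨ (1 + j) % 2 = 0) →
      StabReach (Subgroup.closure {σL, σR}) (1, 1) (1, j) (k, 1) := by
    intro j hj hj' hpar
    have happly : σR (1, j) = (j - 1, k + 1) := h.right 1 j le_rfl (by omega) (by omega) hj'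
    refine (happly ▸ h.stabReach_right_apply (1, j)).trans
      (h.stabReach_of_two_le (by omega) (by omega) (by omega) le_rfl ?_)
    omega
  have hj₁ : j ≠ 1 := by
    rintro rfl
    exact hp₁ rfl
  rcases (show j = 2 ∨ 3 ≤ j by omega) with rfl | hj₃
  · have h12 : σR (1, 2) = (1, k + 1) := h.right 1 2 le_rfl (by omega) le_rfl (by omega)
    refine (h12 ▸ h.stabReach_right_apply (1, 2)).trans (hrow_one (k + 1) (by omega) le_rfl ?_)
    omega
  · exact hrow_one j hj₃ hj' hpar

lemma closure_le_stabilizer (h : IsPuzzlePair k σL σR) :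
    Subgroup.closure {σL, σR} ≤ MulAction.stabilizer (Perm (ℕ × ℕ)) (puzzleOrbit k) := by
  rw [Subgroup.closure_le, insert_subset_iff, singleton_subset_iff]
  simp only [SetLike.mem_coe, MulAction.mem_stabilizer_set' (puzzleOrbit_finite k),
    Perm.smul_def]
  constructor
  · rintro ⟨i, j⟩ hp
    rw [mem_puzzleOrbit] at hp
    rcases (show j ≤ k ∨ j = k + 1 by omega) with hj | rfl
    · rw [h.left i j (by omega) (by omega) (by omega) hj, mem_puzzleOrbit]
      omega
    · rw [h.left_last i (by omega) (by omega), mem_puzzleOrbit]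
      omega
  · rintro ⟨i, j⟩ hp
    rw [mem_puzzleOrbit] at hp
    rcases (show 2 ≤ j ∨ j = 1 by omega) with hj | rfl
    · rw [h.right i j (by omega) (by omega) hj (by omega), mem_puzzleOrbit]
      omega
    · rw [h.right_first i (by omega) (by omega), mem_puzzleOrbit]
      omega

theorem doublyTransitiveOn_puzzleOrbit (h : IsPuzzlePair k σL σR) :
    DoublyTransitiveOn (Subgroup.closure {σL, σR}) (puzzleOrbit k) :=
  .of_stabReach (fun _ hg _ hp => (MulAction.mem_stabilizer_set' (puzzleOrbit_finite k)).1
      (h.closure_le_stabilizer hg) hp)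
    ⟨σL, left_mem_closure, h.left_apply_last_one⟩ fun _ hp hp₁ => h.stabReach_of_mem hp hp₁

/-- The half-turn of the board exchanges the roles of the two blocks. -/
lemma halfTurn_conj (h : IsPuzzlePair k σL σR) :
    IsPuzzlePair k ((halfTurnPerm k)⁻¹ * σR * halfTurnPerm k)
      ((halfTurnPerm k)⁻¹ * σL * halfTurnPerm k) := by
  have hk := h.two_le
  refine ⟨hk, fun i j hi hi' hj hj' => ?_, fun i hi hi' => ?_, fun i j hi hi' hj hj' => ?_,
    fun i hi hi' => ?_⟩ <;>
  simp only [Perm.mul_apply, halfTurnPerm_apply, halfTurnPerm_inv_apply]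
  · rw [halfTurn_of_mem hi hi' hj (by omega), h.right _ _ (by omega) (by omega) (by omega)
      (by omega), halfTurn_of_mem (by omega) (by omega) (by omega) (by omega)]
    congr 1 <;> omega
  · rw [halfTurn_of_mem hi hi' (by omega) le_rfl, show k + 2 - (k + 1) = 1 by omega,
      h.right_first _ (by omega) (by omega),
      halfTurn_of_mem (by omega) (by omega) le_rfl (by omega)]
    congr 1; omega
  · rw [halfTurn_of_mem hi hi' (by omega) hj', h.left _ _ (by omega) (by omega) (by omega)
      (by omega), halfTurn_of_mem (by omega) (by omega) (by omega) (by omega)]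
    congr 1 <;> omega
  · rw [halfTurn_of_mem hi hi' le_rfl (by omega), show k + 2 - 1 = k + 1 by omega,
      h.left_last _ (by omega) (by omega),
      halfTurn_of_mem (by omega) (by omega) (by omega) le_rfl]
    congr 1 <;> omega

end IsPuzzlePair

/-- For the k×(k+1) rectangle (k ≥ 2) with generators σ_L (rotation of the left k×k
block, fixing column k+1) and σ_R (rotation of the right k×k block, fixing column 1),
the puzzle group ⟨σ_L, σ_R⟩ is doubly transitive on each of its orbits: on the full
tile set if k is even, and on each of the two parity classes if k is odd. -/
theorem puzzle_group_doubly_transitive (k : ℕ) (hk : 2 ≤ k) (σL σR : Equiv.Perm (ℕ × ℕ))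
    (hL : ∀ i j, 1 ≤ i → i ≤ k → 1 ≤ j → j ≤ k → σL (i, j) = (j, k + 1 - i))
    (hL' : ∀ i, 1 ≤ i → i ≤ k → σL (i, k + 1) = (i, k + 1))
    (hR : ∀ i j, 1 ≤ i → i ≤ k → 2 ≤ j → j ≤ k + 1 → σR (i, j) = (j - 1, k + 2 - i))
    (hR' : ∀ i, 1 ≤ i → i ≤ k → σR (i, 1) = (i, 1)) :
    (Even k → DoublyTransitiveOn (Subgroup.closure {σL, σR})
      {p : ℕ × ℕ | 1 ≤ p.1 ∧ p.1 ≤ k ∧ 1 ≤ p.2 ∧ p.2 ≤ k + 1}) ∧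
    (Odd k →
      DoublyTransitiveOn (Subgroup.closure {σL, σR})
        {p : ℕ × ℕ | (1 ≤ p.1 ∧ p.1 ≤ k ∧ 1 ≤ p.2 ∧ p.2 ≤ k + 1) ∧ Even (p.1 + p.2)} ∧
      DoublyTransitiveOn (Subgroup.closure {σL, σR})
        {p : ℕ × ℕ | (1 ≤ p.1 ∧ p.1 ≤ k ∧ 1 ≤ p.2 ∧ p.2 ≤ k + 1) ∧ Odd (p.1 + p.2)}) := by
  have h : IsPuzzlePair k σL σR := ⟨hk, hL, hL', hR, hR'⟩
  refine ⟨fun hk₂ => puzzleOrbit_of_even hk₂ ▸ h.doublyTransitiveOn_puzzleOrbit,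
    fun hk₂ => ⟨puzzleOrbit_of_odd hk₂ ▸ h.doublyTransitiveOn_puzzleOrbit, ?_⟩⟩
  have hconj : ∀ σ, (MulAut.conj (halfTurnPerm k)).toMonoidHom
      ((halfTurnPerm k)⁻¹ * σ * halfTurnPerm k) = σ := fun σ => by simp [mul_assoc]
  have hmirror := h.halfTurn_conj.doublyTransitiveOn_puzzleOrbit.map_conj (halfTurnPerm k)
  rwa [MonoidHom.map_closure, image_pair, hconj, hconj, pair_comm,
    halfTurnPerm_image_puzzleOrbit hk₂] at hmirror
end

section
/- For the 2×3 rectangle with generators σ_L = ((1,2),(2,2),(2,1),(1,1)) and σ_R = ((2,2),(1,2),(1,3),(2,3)) (4-cycles on the six tiles), the group G = ⟨σ_L, σ_R⟩ is a subgroup of S₆ of order 120 isomorphic to S₅, and is a proper subgroup of S₆ (in particular G ≠ A₆ and G ≠ S₆). -/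
/-!
The six tiles carry a synthematic total: five fixed-point-free involutions which together
contain each of the fifteen transpositions of the tiles exactly once. Both σ_L and σ_R permute
these five synthemes by conjugation, so conjugation gives a homomorphism G → S₅. Its image
contains a 5-cycle and a transposition, hence is all of S₅, and it is injective because no
nontrivial permutation of the tiles commutes with all five synthemes. So G ≅ S₅ has order 120,
which is neither |S₆| = 720 nor |A₆| = 360.
-/

open Equiv Function

/-- σ_L for the 2×3 rectangle: the 4-cycle ((1,2),(2,2),(2,1),(1,1)) on the six tiles
(here written with 0-based indices), i.e. clockwise rotation of the left 2×2 block. -/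
def sigmaL23 : Equiv.Perm (Fin 2 × Fin 3) :=
  ([((0 : Fin 2), (1 : Fin 3)), (1, 1), (1, 0), (0, 0)]).formPerm

/-- σ_R for the 2×3 rectangle: the 4-cycle ((2,2),(1,2),(1,3),(2,3)) (0-based indices),
i.e. clockwise rotation of the right 2×2 block. -/
def sigmaR23 : Equiv.Perm (Fin 2 × Fin 3) :=
  ([((1 : Fin 2), (1 : Fin 3)), (0, 1), (0, 2), (1, 2)]).formPerm

namespace Subgroup

variable {G ι : Type*} [Group G]

def normalizerConjPerm (S : Set G) : normalizer S →* Perm S where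
  toFun g := (MulAut.conj (g : G)).toEquiv.subtypeEquiv g.2
  map_one' := by ext; simp
  map_mul' g h := by ext; simp [mul_assoc]

noncomputable def normalizerRangePerm {v : ι → G} (hv : Injective v) :
    normalizer (Set.range v) →* Perm ι :=
  (Equiv.ofInjective v hv).symm.permCongrHom.toMonoidHom.comp (normalizerConjPerm _)

theorem apply_normalizerRangePerm {v : ι → G} (hv : Injective v) (g : normalizer (Set.range v))
    (i : ι) : v (normalizerRangePerm hv g i) = g * v i * (g : G)⁻¹ := by
  simp [normalizerRangePerm, normalizerConjPerm, apply_ofInjective_symm]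

theorem mem_normalizer_range_of_conj_eq {v : ι → G} {g : G} (π : Perm ι)
    (h : ∀ i, g * v i * g⁻¹ = v (π i)) : g ∈ normalizer (Set.range v) := by
  intro n
  constructor
  · rintro ⟨i, rfl⟩
    exact ⟨π i, (h i).symm⟩
  · rintro ⟨j, hj⟩
    refine ⟨π.symm j, ?_⟩
    have := h (π.symm j)
    rw [apply_symm_apply, hj] at this
    simpa using this

end Subgroup

open Subgroup

def syntheme : Fin 5 → Perm (Fin 2 × Fin 3) :=
  ![swap (0, 0) (0, 1) * swap (0, 2) (1, 0) * swap (1, 1) (1, 2),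
    swap (0, 0) (0, 2) * swap (0, 1) (1, 1) * swap (1, 0) (1, 2),
    swap (0, 0) (1, 0) * swap (0, 1) (1, 2) * swap (0, 2) (1, 1),
    swap (0, 0) (1, 1) * swap (0, 1) (1, 0) * swap (0, 2) (1, 2),
    swap (0, 0) (1, 2) * swap (0, 1) (0, 2) * swap (1, 0) (1, 1)]

theorem syntheme_injective : Injective syntheme := by decide

theorem eq_of_forall_syntheme_word_fixed (x y : Fin 2 × Fin 3)
    (h : ∀ i j k, syntheme k (syntheme j (syntheme i x)) = x →
      syntheme k (syntheme j (syntheme i y)) = y) : y = x := by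
  revert x y
  decide

theorem eq_one_of_forall_conj_syntheme_eq {g : Perm (Fin 2 × Fin 3)}
    (h : ∀ i, g * syntheme i * g⁻¹ = syntheme i) : g = 1 := by
  have hcomm (i : Fin 5) (y : Fin 2 × Fin 3) : g (syntheme i y) = syntheme i (g y) := by
    rw [← Perm.mul_apply, mul_inv_eq_iff_eq_mul.mp (h i), Perm.mul_apply]
  refine Equiv.ext fun x => eq_of_forall_syntheme_word_fixed x (g x) fun i j k hx => ?_
  rw [← hcomm, ← hcomm, ← hcomm, hx]

def sigmaL5 : Perm (Fin 5) := [0, 1, 4, 2].formPerm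

def sigmaR5 : Perm (Fin 5) := [0, 1, 4, 3].formPerm

theorem sigmaL23_conj_syntheme (i : Fin 5) :
    sigmaL23 * syntheme i * sigmaL23⁻¹ = syntheme (sigmaL5 i) := by
  revert i
  decide

theorem sigmaR23_conj_syntheme (i : Fin 5) :
    sigmaR23 * syntheme i * sigmaR23⁻¹ = syntheme (sigmaR5 i) := by
  revert i
  decide

theorem closure_sigmaL5_sigmaR5 : closure {sigmaL5, sigmaR5} = ⊤ := by
  have hcycle : sigmaL5 * sigmaR5 = [0, 4, 3, 1, 2].formPerm := by decide
  have hswap : (sigmaL5 * sigmaR5) ^ 2 * sigmaL5 = swap 2 3 := by decide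
  have hL := subset_closure (Set.mem_insert sigmaL5 {sigmaR5})
  have hR := subset_closure (Set.mem_insert_of_mem sigmaL5 (Set.mem_singleton sigmaR5))
  rw [eq_top_iff, ← Perm.closure_prime_cycle_swap (σ := sigmaL5 * sigmaR5)
    (τ := (sigmaL5 * sigmaR5) ^ 2 * sigmaL5) (by norm_num)
    (hcycle ▸ List.isCycle_formPerm (by decide) (by decide))
    (by rw [hcycle, List.support_formPerm_of_nodup _ (by decide) (by decide)]; decide)
    (hswap ▸ ⟨2, 3, by decide, rfl⟩), closure_le]
  rintro _ (rfl | rfl)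
  · exact mul_mem hL hR
  · exact mul_mem (pow_mem (mul_mem hL hR) 2) hL

abbrev puzzleGroup23 : Subgroup (Perm (Fin 2 × Fin 3)) := closure {sigmaL23, sigmaR23}

theorem puzzleGroup23_le_normalizer_range_syntheme :
    puzzleGroup23 ≤ normalizer (Set.range syntheme) := by
  rw [closure_le]
  rintro _ (rfl | rfl)
  · exact mem_normalizer_range_of_conj_eq sigmaL5 sigmaL23_conj_syntheme
  · exact mem_normalizer_range_of_conj_eq sigmaR5 sigmaR23_conj_syntheme

noncomputable def synthemePerm : puzzleGroup23 →* Perm (Fin 5) :=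
  (normalizerRangePerm syntheme_injective).comp
    (inclusion puzzleGroup23_le_normalizer_range_syntheme)

theorem syntheme_synthemePerm_apply (g : puzzleGroup23) (i : Fin 5) :
    syntheme (synthemePerm g i) = g * syntheme i * (g : Perm (Fin 2 × Fin 3))⁻¹ :=
  apply_normalizerRangePerm syntheme_injective _ i

theorem synthemePerm_injective : Injective synthemePerm := by
  refine (injective_iff_map_eq_one _).mpr fun g hg => Subtype.ext ?_
  refine eq_one_of_forall_conj_syntheme_eq fun i => ?_
  rw [← syntheme_synthemePerm_apply, hg, Perm.one_apply]

theorem synthemePerm_surjective : Surjective synthemePerm := by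
  have image_eq {g : Perm (Fin 2 × Fin 3)} (hg : g ∈ puzzleGroup23) {π : Perm (Fin 5)}
      (h : ∀ i, g * syntheme i * g⁻¹ = syntheme (π i)) : synthemePerm ⟨g, hg⟩ = π :=
    Equiv.ext fun i => syntheme_injective ((syntheme_synthemePerm_apply _ i).trans (h i))
  rw [← MonoidHom.range_eq_top, eq_top_iff, ← closure_sigmaL5_sigmaR5, closure_le]
  rintro _ (rfl | rfl)
  · exact ⟨_, image_eq (subset_closure (by simp)) sigmaL23_conj_syntheme⟩
  · exact ⟨_, image_eq (subset_closure (by simp)) sigmaR23_conj_syntheme⟩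

theorem synthemePerm_bijective : Bijective synthemePerm :=
  ⟨synthemePerm_injective, synthemePerm_surjective⟩

theorem card_puzzleGroup23 : Nat.card puzzleGroup23 = 120 := by
  rw [Nat.card_congr (MulEquiv.ofBijective _ synthemePerm_bijective).toEquiv, Nat.card_perm,
    Nat.card_eq_fintype_card, Fintype.card_fin]
  rfl

/-- For the 2×3 rectangle, the puzzle group G = ⟨σ_L, σ_R⟩ is a subgroup of S₆ of
order 120 isomorphic to S₅, and it is a proper subgroup of S₆ (in particular
G ≠ A₆ and G ≠ S₆). -/
theorem two_by_three_puzzle_group :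
    Nat.card (Subgroup.closure {sigmaL23, sigmaR23}) = 120 ∧
    Nonempty ((Subgroup.closure {sigmaL23, sigmaR23}) ≃* Equiv.Perm (Fin 5)) ∧
    Subgroup.closure {sigmaL23, sigmaR23} ≠ ⊤ ∧
    Subgroup.closure {sigmaL23, sigmaR23} ≠ alternatingGroup (Fin 2 × Fin 3) := by
  refine ⟨card_puzzleGroup23, ⟨MulEquiv.ofBijective _ synthemePerm_bijective⟩, fun h => ?_,
    fun h => ?_⟩
  · have hcard := card_puzzleGroup23
    rw [puzzleGroup23, h, card_top, Nat.card_perm] at hcard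
    simp [Nat.factorial] at hcard
  · have hcard := card_puzzleGroup23
    rw [puzzleGroup23, h, nat_card_alternatingGroup] at hcard
    simp [Nat.factorial] at hcard
end

section
/- For k even with k ≡ 0 mod 4, the conjugate τ = (σ_R² σ_L²)^{k/4} σ_R (σ_R² σ_L²)^{-k/4} in the k×(k+1) rectangle fixes each tile (i, k/2+1) for 1 ≤ i ≤ k, and decomposes the remaining k² tiles into k²/4 disjoint 4-cycles of the form ((i,j), (k/2+j, k/2+1+i), (i, k+2-j), (k/2+j, k/2+1-i)) for 1 ≤ i,j ≤ k/2. -/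
/-!
Glue column `k + 1` of the rectangle to column `1` with the rows reversed, obtaining a Möbius
band. `σ_L²` and `σ_R²` are the half turns of the left and the right `k × k` square, and their
composite `φ` is the translation by two columns of this band: inside the rectangle it moves
each tile two columns right, and across the seam it reverses the rows exactly as the gluing
does. Hence `φ^(k/4)` is the translation by `k/2` columns, and `τ = φ^(k/4) σ_R φ^(-k/4)` sends
`φ^(k/4) p` to `φ^(k/4) (σ_R p)`: the fixed tiles and the 4-cycles of `τ` are the translates of
the fixed column and of the 4-cycles of the quarter turn `σ_R`.
-/

open Equiv

structure RotatesLeftSquare (k : ℕ) (σ : Perm (ℕ × ℕ)) : Prop where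
  apply_of_le : ∀ i j, 1 ≤ i → i ≤ k → 1 ≤ j → j ≤ k → σ (i, j) = (j, k + 1 - i)
  apply_last_col : ∀ i, 1 ≤ i → i ≤ k → σ (i, k + 1) = (i, k + 1)

structure RotatesRightSquare (k : ℕ) (σ : Perm (ℕ × ℕ)) : Prop where
  apply_of_two_le :
    ∀ i j, 1 ≤ i → i ≤ k → 2 ≤ j → j ≤ k + 1 → σ (i, j) = (j - 1, k + 2 - i)
  apply_first_col : ∀ i, 1 ≤ i → i ≤ k → σ (i, 1) = (i, 1)

abbrev tiles (k : ℕ) : Set (ℕ × ℕ) := Set.Icc 1 k ×ˢ Set.Icc 1 (k + 1)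

/-- Translation by `s` columns on the Möbius band obtained from the rectangle by gluing
column `k + 1` to column `1` with the rows reversed (valid for `s ≤ k + 1`). -/
def mobiusShift (k s : ℕ) (p : ℕ × ℕ) : ℕ × ℕ :=
  if p.2 + s ≤ k + 1 then (p.1, p.2 + s) else (k + 1 - p.1, p.2 + s - (k + 1))

section MobiusShift

variable {k s : ℕ} {p : ℕ × ℕ}

theorem mobiusShift_zero (hp : p ∈ tiles k) : mobiusShift k 0 p = p := by
  obtain ⟨_, _, hj⟩ := hp
  simp [mobiusShift, hj]

theorem mobiusShift_mem_tiles (hs : s ≤ k + 1) (hp : p ∈ tiles k) :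
    mobiusShift k s p ∈ tiles k := by
  obtain ⟨⟨_, _⟩, _, _⟩ := hp
  unfold mobiusShift
  split_ifs <;> constructor <;> constructor <;> dsimp only <;> omega

theorem mobiusShift_mobiusShift {s' : ℕ} (hs : s + s' ≤ k + 1) (hp : p ∈ tiles k) :
    mobiusShift k s' (mobiusShift k s p) = mobiusShift k (s + s') p := by
  obtain ⟨⟨_, _⟩, _, _⟩ := hp
  unfold mobiusShift
  split_ifs <;> dsimp only at * <;> ext <;> dsimp only <;> omega

end MobiusShift

section Rotations

variable {k : ℕ} {σL σR : Perm (ℕ × ℕ)}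

theorem RotatesRightSquare.apply_mem_tiles (hR : RotatesRightSquare k σR) {p : ℕ × ℕ}
    (hp : p ∈ tiles k) : σR p ∈ tiles k := by
  obtain ⟨i, j⟩ := p
  simp only [Set.mem_prod, Set.mem_Icc] at hp
  obtain ⟨⟨hi₁, hi₂⟩, hj₁, hj₂⟩ := hp
  rcases Nat.lt_or_ge j 2 with hj | hj
  · obtain rfl : j = 1 := by omega
    rw [hR.apply_first_col i hi₁ hi₂]
    exact ⟨⟨hi₁, hi₂⟩, le_rfl, by omega⟩
  · rw [hR.apply_of_two_le i j hi₁ hi₂ hj hj₂]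
    exact ⟨⟨by omega, by omega⟩, by omega, by omega⟩

theorem sq_mul_sq_apply (hL : RotatesLeftSquare k σL) (hR : RotatesRightSquare k σR)
    {p : ℕ × ℕ} (hp : p ∈ tiles k) : (σR ^ 2 * σL ^ 2) p = mobiusShift k 2 p := by
  obtain ⟨i, j⟩ := p
  simp only [Set.mem_prod, Set.mem_Icc] at hp
  obtain ⟨⟨hi₁, hi₂⟩, hj₁, hj₂⟩ := hp
  simp only [sq, Perm.mul_apply, mobiusShift]
  rcases (by omega : j + 2 ≤ k + 1 ∨ j = k ∨ j = k + 1) with hj | hj | hj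
  · rw [if_pos hj]
    calc σR (σR (σL (σL (i, j)))) = σR (σR (σL (j, k + 1 - i))) := by
          rw [hL.apply_of_le i j hi₁ hi₂ hj₁ (by omega)]
      _ = σR (σR (k + 1 - i, k + 1 - j)) := by
          rw [hL.apply_of_le j _ hj₁ (by omega) (by omega) (by omega)]
      _ = σR (k - j, i + 1) := by
          rw [hR.apply_of_two_le (k + 1 - i) (k + 1 - j) (by omega) (by omega) (by omega)
            (by omega)]
          congr 2 <;> omega
      _ = (i, j + 2) := by
          rw [hR.apply_of_two_le (k - j) (i + 1) (by omega) (by omega) (by omega) (by omega)]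
          ext <;> dsimp only <;> omega
  · subst j
    rw [if_neg (by omega)]
    calc σR (σR (σL (σL (i, k)))) = σR (σR (σL (k, k + 1 - i))) := by
          rw [hL.apply_of_le i k hi₁ hi₂ (by omega) le_rfl]
      _ = σR (σR (k + 1 - i, 1)) := by
          rw [hL.apply_of_le k _ (by omega) le_rfl (by omega) (by omega)]
          congr 3; omega
      _ = (k + 1 - i, k + 2 - (k + 1)) := by
          rw [hR.apply_first_col _ (by omega) (by omega),
            hR.apply_first_col _ (by omega) (by omega)]
          congr 1; omega
  · subst j
    rw [if_neg (by omega)]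
    calc σR (σR (σL (σL (i, k + 1)))) = σR (σR (i, k + 1)) := by
          rw [hL.apply_last_col i hi₁ hi₂, hL.apply_last_col i hi₁ hi₂]
      _ = σR (k, k + 2 - i) := by
          rw [hR.apply_of_two_le i (k + 1) hi₁ hi₂ (by omega) le_rfl]
          congr 2
      _ = (k + 1 - i, k + 1 + 2 - (k + 1)) := by
          rw [hR.apply_of_two_le k (k + 2 - i) (by omega) le_rfl (by omega) (by omega)]
          congr 1 <;> omega

theorem sq_mul_sq_pow_apply (hL : RotatesLeftSquare k σL) (hR : RotatesRightSquare k σR)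
    {t : ℕ} (ht : 2 * t ≤ k + 1) {p : ℕ × ℕ} (hp : p ∈ tiles k) :
    ((σR ^ 2 * σL ^ 2) ^ t) p = mobiusShift k (2 * t) p := by
  induction t with
  | zero => exact (mobiusShift_zero hp).symm
  | succ t ih =>
    rw [pow_succ', Perm.mul_apply, ih (by omega),
      sq_mul_sq_apply hL hR (mobiusShift_mem_tiles (by omega) hp),
      mobiusShift_mobiusShift (by omega) hp, mul_add, mul_one]

theorem conj_sq_mul_sq_pow_apply_eq (hL : RotatesLeftSquare k σL)
    (hR : RotatesRightSquare k σR) {t : ℕ} (ht : 2 * t ≤ k + 1) {p q a b : ℕ × ℕ}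
    (hp : p ∈ tiles k) (hq : σR p = q) (ha : mobiusShift k (2 * t) p = a)
    (hb : mobiusShift k (2 * t) q = b) :
    ((σR ^ 2 * σL ^ 2) ^ t * σR * ((σR ^ 2 * σL ^ 2) ^ t)⁻¹) a = b := by
  rw [← ha, ← sq_mul_sq_pow_apply hL hR ht hp, ← hb, ← hq,
    ← sq_mul_sq_pow_apply hL hR ht (hR.apply_mem_tiles hp)]
  simp [Perm.mul_apply]

end Rotations

/-- For k ≡ 0 mod 4, the conjugate τ = (σ_R² σ_L²)^{k/4} σ_R (σ_R² σ_L²)^{-k/4} in the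
k×(k+1) rectangle fixes each tile (i, k/2+1) for 1 ≤ i ≤ k, and decomposes the remaining
k² tiles into k²/4 disjoint 4-cycles of the form
((i,j), (k/2+j, k/2+1+i), (i, k+2-j), (k/2+j, k/2+1-i)) for 1 ≤ i,j ≤ k/2. -/
theorem conjugate_cycle_structure (k : ℕ) (hk : k % 4 = 0) (σL σR : Equiv.Perm (ℕ × ℕ))
    (hL : ∀ i j, 1 ≤ i → i ≤ k → 1 ≤ j → j ≤ k → σL (i, j) = (j, k + 1 - i))
    (hL' : ∀ i, 1 ≤ i → i ≤ k → σL (i, k + 1) = (i, k + 1))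
    (hR : ∀ i j, 1 ≤ i → i ≤ k → 2 ≤ j → j ≤ k + 1 → σR (i, j) = (j - 1, k + 2 - i))
    (hR' : ∀ i, 1 ≤ i → i ≤ k → σR (i, 1) = (i, 1)) :
    (∀ i, 1 ≤ i → i ≤ k →
      ((σR ^ 2 * σL ^ 2) ^ (k / 4) * σR * ((σR ^ 2 * σL ^ 2) ^ (k / 4))⁻¹)
        (i, k / 2 + 1) = (i, k / 2 + 1)) ∧
    (∀ i j, 1 ≤ i → i ≤ k / 2 → 1 ≤ j → j ≤ k / 2 →
      ((σR ^ 2 * σL ^ 2) ^ (k / 4) * σR * ((σR ^ 2 * σL ^ 2) ^ (k / 4))⁻¹)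
        (i, j) = (k / 2 + j, k / 2 + 1 + i) ∧
      ((σR ^ 2 * σL ^ 2) ^ (k / 4) * σR * ((σR ^ 2 * σL ^ 2) ^ (k / 4))⁻¹)
        (k / 2 + j, k / 2 + 1 + i) = (i, k + 2 - j) ∧
      ((σR ^ 2 * σL ^ 2) ^ (k / 4) * σR * ((σR ^ 2 * σL ^ 2) ^ (k / 4))⁻¹)
        (i, k + 2 - j) = (k / 2 + j, k / 2 + 1 - i) ∧
      ((σR ^ 2 * σL ^ 2) ^ (k / 4) * σR * ((σR ^ 2 * σL ^ 2) ^ (k / 4))⁻¹)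
        (k / 2 + j, k / 2 + 1 - i) = (i, j)) := by
  obtain ⟨m, rfl⟩ : ∃ m, k = 4 * m := ⟨k / 4, by omega⟩
  rw [show 4 * m / 4 = m by omega, show 4 * m / 2 = 2 * m by omega]
  have hτ := @conj_sq_mul_sq_pow_apply_eq _ _ _ ⟨hL, hL'⟩ ⟨hR, hR'⟩ m (by omega)
  -- the tiles `p` are the preimages under `(σR ^ 2 * σL ^ 2) ^ m` of the tiles in the claim
  refine ⟨fun i hi₁ hi₂ => hτ (p := (i, 1)) ?_ (hR' i hi₁ hi₂) ?_ ?_,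
    fun i j hi₁ hi₂ hj₁ hj₂ =>
      ⟨hτ (p := (4 * m + 1 - i, 2 * m + 1 + j)) ?_ (hR _ _ ?_ ?_ ?_ ?_) ?_ ?_,
        hτ (p := (2 * m + j, i + 1)) ?_ (hR _ _ ?_ ?_ ?_ ?_) ?_ ?_,
        hτ (p := (i, 2 * m + 2 - j)) ?_ (hR _ _ ?_ ?_ ?_ ?_) ?_ ?_,
        hτ (p := (2 * m + 1 - j, 4 * m + 2 - i)) ?_ (hR _ _ ?_ ?_ ?_ ?_) ?_ ?_⟩⟩
  all_goals first
    | omega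
    | exact ⟨⟨by omega, by omega⟩, by omega, by omega⟩
    | (unfold mobiusShift; split_ifs <;> ext <;> dsimp only <;> omega)
end
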